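/- (Hypergeometric Picard–Fuchs equation.) The function I_0 is twice differentiable on (0, ∞), and for every h > 0 its second derivative I_0''(h) satisfies 4h·(4h + 1)·I_0''(h) = −3·I_0(h). -/

import Mathlib

/-!
Substituting `x = xmax h * sin θ` factors `2h + x² - x⁴/2` as `(xmax h * cos θ)² u / 2` with
`u = xmax² (1 + sin² θ) - 2 > 0`, so `I_i = ellI i` and `I'_i = ellI' i` become integrals over
`[-π/2, π/2]` of smooth functions divided by `√u`; in this form one may differentiate in `h` under
the integral sign and integrate by parts in `θ` without boundary terms. Differentiation gives
`I_i' = I'_i`, and integrating by parts against `sin^(i+1) θ cos θ √u` and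
`(xmax² sin² θ - 1) sin^(i+1) θ cos θ √u` gives
`(i+3) I_i = 4h I'_i + I'_(i+2)` and `(i+5) I_(i+2) = (i+1) I_i + (4h+1) I'_(i+2)`.
For `i = 0` these close up to the first-order system `I_0' = I'_0`, `I_2' = I'_2`,
`4h I'_0 = 3 I_0 - I'_2`, `(4h+1) I'_2 = 5 I_2 - I_0`, from which `I_0''` is eliminated.
-/

open Real Set Filter intervalIntegral

/-- Right endpoint of the exterior oval: `x_max(h) = √(1 + √(1+4h))`. -/
noncomputable def xmax (h : ℝ) : ℝ := Real.sqrt (1 + Real.sqrt (1 + 4*h))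

/-- Complete elliptic integral `I_i(h) = ∫_{-x_max}^{x_max} x^i √(2h + x² - x⁴/2) dx`. -/
noncomputable def ellI (i : ℕ) (h : ℝ) : ℝ :=
  ∫ x in (-xmax h)..(xmax h), x^i * Real.sqrt (2*h + x^2 - x^4/2)

/-- Complete elliptic integral `I'_i(h) = ∫_{-x_max}^{x_max} x^i (2h + x² - x⁴/2)^{-1/2} dx`. -/
noncomputable def ellI' (i : ℕ) (h : ℝ) : ℝ :=
  ∫ x in (-xmax h)..(xmax h), x^i / Real.sqrt (2*h + x^2 - x^4/2)

/-- The factor `x² + xmax² - 2` of `2h + x² - x⁴/2 = (xmax² - x²)(x² + xmax² - 2)/2`,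
at `x = xmax h * sin θ`. -/
noncomputable def trigRadicand (h θ : ℝ) : ℝ := xmax h ^ 2 * (1 + sin θ ^ 2) - 2

noncomputable def trigIntegral (h : ℝ) (F : ℝ → ℝ) : ℝ :=
  ∫ θ in -(π / 2)..π / 2, F θ / √(trigRadicand h θ)

lemma xmax_sq (h : ℝ) : xmax h ^ 2 = 1 + √(1 + 4 * h) :=
  sq_sqrt (by positivity)

lemma xmax_pos (h : ℝ) : 0 < xmax h :=
  sqrt_pos.2 (by positivity)

lemma xmax_sq_sub_one_sq {h : ℝ} (hh : 0 ≤ 1 + 4 * h) : (xmax h ^ 2 - 1) ^ 2 = 1 + 4 * h := by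
  rw [xmax_sq, add_sub_cancel_left, sq_sqrt hh]

lemma four_mul_eq_xmax_sq_mul {h : ℝ} (hh : 0 ≤ 1 + 4 * h) :
    4 * h = xmax h ^ 2 * (xmax h ^ 2 - 2) := by
  linear_combination -(xmax_sq_sub_one_sq hh)

lemma two_lt_xmax_sq {h : ℝ} (hh : 0 < h) : 2 < xmax h ^ 2 := by
  have : 1 < √(1 + 4 * h) := by rw [lt_sqrt zero_le_one]; linarith
  rw [xmax_sq]; linarith

lemma trigRadicand_pos {h : ℝ} (hh : 0 < h) (θ : ℝ) : 0 < trigRadicand h θ := by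
  have := two_lt_xmax_sq hh
  unfold trigRadicand; nlinarith [sq_nonneg (sin θ)]

@[fun_prop]
lemma continuous_trigRadicand (h : ℝ) : Continuous (trigRadicand h) := by
  unfold trigRadicand; fun_prop

lemma radicand_xmax_mul_sin {h : ℝ} (hh : 0 ≤ 1 + 4 * h) (θ : ℝ) :
    2 * h + (xmax h * sin θ) ^ 2 - (xmax h * sin θ) ^ 4 / 2
      = (xmax h * cos θ) ^ 2 * trigRadicand h θ / 2 := by
  unfold trigRadicand
  rw [mul_pow _ (cos θ), cos_sq']
  linear_combination four_mul_eq_xmax_sq_mul hh / 2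

lemma integral_neg_eq_integral_sin_subst {a : ℝ} (ha : 0 ≤ a) (g : ℝ → ℝ) :
    ∫ x in -a..a, g x = ∫ θ in -(π / 2)..π / 2, g (a * sin θ) * (a * cos θ) := by
  have hcos : ∀ θ ∈ Ioo (min (-(π / 2)) (π / 2)) (max (-(π / 2)) (π / 2)), 0 ≤ a * cos θ := by
    intro θ hθ
    rw [min_eq_left (by linarith [pi_pos]), max_eq_right (by linarith [pi_pos])] at hθ
    exact mul_nonneg ha (cos_nonneg_of_mem_Icc (Ioo_subset_Icc_self hθ))
  have := integral_comp_mul_deriv_of_deriv_nonneg (g := g) (by fun_prop)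
    (fun θ _ => (hasDerivAt_sin θ).const_mul a) hcos
  simpa using this.symm

lemma sqrt_radicand_xmax_mul_sin {h θ : ℝ} (hh : 0 ≤ 1 + 4 * h) (hθ : 0 ≤ cos θ) :
    √(2 * h + (xmax h * sin θ) ^ 2 - (xmax h * sin θ) ^ 4 / 2)
      = xmax h * cos θ * √(trigRadicand h θ) / √2 := by
  rw [radicand_xmax_mul_sin hh, mul_div_assoc, sqrt_mul (sq_nonneg _),
    sqrt_sq (mul_nonneg (xmax_pos h).le hθ), sqrt_div' _ zero_le_two, mul_div_assoc]

lemma ellI_eq_sin_subst {h : ℝ} (hh : 0 ≤ 1 + 4 * h) (i : ℕ) :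
    ellI i h = √2 / 2 * xmax h ^ (i + 2) *
      ∫ θ in -(π / 2)..π / 2, sin θ ^ i * cos θ ^ 2 * √(trigRadicand h θ) := by
  rw [ellI, integral_neg_eq_integral_sin_subst (xmax_pos h).le, ← integral_const_mul]
  refine integral_congr_Ioo_of_le (by linarith [pi_pos]) fun θ hθ => ?_
  rw [sqrt_radicand_xmax_mul_sin hh (cos_nonneg_of_mem_Icc (Ioo_subset_Icc_self hθ))]
  field_simp
  rw [sq_sqrt zero_le_two]
  ring

lemma ellI'_eq_sin_subst {h : ℝ} (hh : 0 ≤ 1 + 4 * h) (i : ℕ) :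
    ellI' i h = √2 * xmax h ^ i * trigIntegral h (fun θ => sin θ ^ i) := by
  rw [ellI', trigIntegral, integral_neg_eq_integral_sin_subst (xmax_pos h).le,
    ← integral_const_mul]
  refine integral_congr_Ioo_of_le (by linarith [pi_pos]) fun θ hθ => ?_
  have hcos : 0 < cos θ := cos_pos_of_mem_Ioo hθ
  rw [sqrt_radicand_xmax_mul_sin hh hcos.le]
  have := (xmax_pos h).ne'
  field_simp
  rw [mul_pow]

lemma continuous_div_sqrt_trigRadicand {h : ℝ} (hh : 0 < h) {F : ℝ → ℝ} (hF : Continuous F) :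
    Continuous fun θ => F θ / √(trigRadicand h θ) :=
  hF.div (continuous_trigRadicand h).sqrt fun θ => (sqrt_pos.2 (trigRadicand_pos hh θ)).ne'

lemma trigIntegral_linear_combination {h : ℝ} (hh : 0 < h) {F G H : ℝ → ℝ}
    (hF : Continuous F) (hG : Continuous G) (hH : Continuous H) (a b c : ℝ) :
    trigIntegral h (fun θ => a * F θ + b * G θ + c * H θ)
      = a * trigIntegral h F + b * trigIntegral h G + c * trigIntegral h H := by
  have hint : ∀ {F : ℝ → ℝ}, Continuous F → ∀ a : ℝ,
      IntervalIntegrable (fun θ => a * (F θ / √(trigRadicand h θ)))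
        MeasureTheory.volume (-(π / 2)) (π / 2) :=
    fun hF a => ((continuous_div_sqrt_trigRadicand hh hF).const_mul a).intervalIntegrable _ _
  simp only [trigIntegral, add_div, mul_div_assoc]
  rw [integral_add ((hint hF a).add (hint hG b)) (hint hH c),
    integral_add (hint hF a) (hint hG b), integral_const_mul, integral_const_mul,
    integral_const_mul]

lemma hasDerivAt_trigRadicand (h θ : ℝ) :
    HasDerivAt (trigRadicand h) (2 * xmax h ^ 2 * sin θ * cos θ) θ := by
  refine ((((hasDerivAt_sin θ).pow 2).const_add 1).const_mul (xmax h ^ 2)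
    |>.sub_const 2).congr_deriv ?_
  simp only [Nat.cast_ofNat]
  ring

/-- Integration by parts against `q θ * cos θ * √(trigRadicand h θ)`, which vanishes at `±π/2`. -/
lemma trigIntegral_eq_zero_of_hasDerivAt {h : ℝ} (hh : 0 < h) {q q' : ℝ → ℝ}
    (hq : ∀ θ, HasDerivAt q (q' θ) θ) (hq' : Continuous q') :
    trigIntegral h (fun θ => (q' θ * cos θ - q θ * sin θ) * trigRadicand h θ
      + xmax h ^ 2 * q θ * sin θ * cos θ ^ 2) = 0 := by
  have hW : ∀ θ, HasDerivAt (fun θ => q θ * cos θ * √(trigRadicand h θ))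
      (((q' θ * cos θ - q θ * sin θ) * trigRadicand h θ
        + xmax h ^ 2 * q θ * sin θ * cos θ ^ 2) / √(trigRadicand h θ)) θ := by
    intro θ
    have hu := trigRadicand_pos hh θ
    refine (((hq θ).mul (hasDerivAt_cos θ)).mul
      ((hasDerivAt_trigRadicand h θ).sqrt hu.ne')).congr_deriv ?_
    simp only [Pi.mul_apply]
    field_simp
    rw [sq_sqrt hu.le]
    ring
  have hcont : Continuous q := continuous_iff_continuousAt.2 fun θ => (hq θ).continuousAt
  rw [trigIntegral, integral_eq_sub_of_hasDerivAt (fun θ _ => hW θ)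
    ((continuous_div_sqrt_trigRadicand hh (by fun_prop)).intervalIntegrable _ _)]
  simp

lemma hasDerivAt_integral_mul_sqrt {g : ℝ → ℝ} (hg : Continuous g) (a b : ℝ) {A : ℝ}
    (hA : 2 < A) :
    HasDerivAt (fun A => ∫ θ in a..b, g θ * √(A * (1 + sin θ ^ 2) - 2))
      (∫ θ in a..b, g θ * (1 + sin θ ^ 2) / (2 * √(A * (1 + sin θ ^ 2) - 2))) A := by
  set ε := (A - 2) / 2 with hε
  have hpos : ∀ B ∈ Metric.closedBall A ε, ∀ θ : ℝ, 0 < B * (1 + sin θ ^ 2) - 2 := by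
    intro B hB θ
    have : 2 < B := by
      rw [Metric.mem_closedBall, Real.dist_eq, abs_le] at hB; linarith [hB.1]
    nlinarith [sq_nonneg (sin θ)]
  have hK : IsCompact (Metric.closedBall A ε ×ˢ uIcc a b) :=
    (isCompact_closedBall A ε).prod isCompact_uIcc
  have hcont : ContinuousOn
      (fun p : ℝ × ℝ => g p.2 * (1 + sin p.2 ^ 2) / (2 * √(p.1 * (1 + sin p.2 ^ 2) - 2)))
      (Metric.closedBall A ε ×ˢ uIcc a b) :=
    ContinuousOn.div (by fun_prop) (by fun_prop)
      fun p hp => by have := hpos p.1 hp.1 p.2; positivity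
  obtain ⟨C, hC⟩ := hK.exists_bound_of_continuousOn hcont
  have hA' : A ∈ Metric.closedBall A ε := Metric.mem_closedBall_self (by positivity)
  refine (intervalIntegral.hasDerivAt_integral_of_dominated_loc_of_deriv_le
    (F := fun A θ => g θ * √(A * (1 + sin θ ^ 2) - 2))
    (F' := fun A θ => g θ * (1 + sin θ ^ 2) / (2 * √(A * (1 + sin θ ^ 2) - 2)))
    (bound := fun _ => C) (Metric.ball_mem_nhds A (by positivity : 0 < ε))
    (Eventually.of_forall fun B => (by fun_prop : Continuous _).aestronglyMeasurable)
    ((by fun_prop : Continuous _).intervalIntegrable _ _)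
    (Continuous.aestronglyMeasurable (Continuous.div (by fun_prop) (by fun_prop)
      fun θ => by have := hpos A hA' θ; positivity))
    (MeasureTheory.ae_of_all _ fun θ hθ B hB => hC (B, θ) ⟨Metric.ball_subset_closedBall hB,
      uIoc_subset_uIcc hθ⟩)
    intervalIntegrable_const
    (MeasureTheory.ae_of_all _ fun θ _ B hB => ?_)).2
  have hB := hpos B (Metric.ball_subset_closedBall hB) θ
  refine ((((hasDerivAt_id B).mul_const _).sub_const 2).sqrt hB.ne'
    |>.const_mul (g θ)).congr_deriv ?_
  simp only [id, one_mul]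
  ring

lemma hasDerivAt_xmax {h : ℝ} (hh : 0 < 1 + 4 * h) :
    HasDerivAt xmax (1 / (xmax h * (xmax h ^ 2 - 1))) h := by
  have hd := ((((hasDerivAt_id h).const_mul 4).const_add 1).sqrt hh.ne').const_add 1 |>.sqrt
    (by positivity)
  refine hd.congr_deriv ?_
  rw [xmax_sq, add_sub_cancel_left]
  unfold xmax
  simp only [id]
  field_simp
  norm_num

lemma integral_mul_sqrt_trigRadicand (h : ℝ) (g : ℝ → ℝ) :
    ∫ θ in -(π / 2)..π / 2, g θ * √(trigRadicand h θ)
      = trigIntegral h (fun θ => g θ * trigRadicand h θ) := by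
  simp only [trigIntegral, mul_div_assoc, div_sqrt]

lemma hasDerivAt_integral_mul_sqrt_trigRadicand {g : ℝ → ℝ} (hg : Continuous g) {h : ℝ}
    (hh : 0 < h) :
    HasDerivAt (fun x => ∫ θ in -(π / 2)..π / 2, g θ * √(trigRadicand x θ))
      (trigIntegral h (fun θ => g θ * (1 + sin θ ^ 2)) / (xmax h ^ 2 - 1)) h := by
  have ha := two_lt_xmax_sq hh
  have hd := (hasDerivAt_integral_mul_sqrt hg (-(π / 2)) (π / 2) ha).comp h
    ((hasDerivAt_xmax (by linarith)).pow 2)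
  refine hd.congr_deriv ?_
  rw [trigIntegral, ← integral_div, ← integral_mul_const]
  refine integral_congr fun θ _ => ?_
  have := (xmax_pos h).ne'
  have : xmax h ^ 2 - 1 ≠ 0 := by linarith
  simp only [trigRadicand, Nat.cast_ofNat]
  field_simp
  ring

lemma hasDerivAt_sin_pow_succ (n : ℕ) (θ : ℝ) :
    HasDerivAt (fun θ => sin θ ^ (n + 1)) ((n + 1) * sin θ ^ n * cos θ) θ := by
  refine ((hasDerivAt_sin θ).pow (n + 1)).congr_deriv ?_
  push_cast
  ring

theorem hasDerivAt_ellI (i : ℕ) {h : ℝ} (hh : 0 < h) : HasDerivAt (ellI i) (ellI' i h) h := by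
  have ha := two_lt_xmax_sq hh
  have hG := hasDerivAt_integral_mul_sqrt_trigRadicand
    (g := fun θ => sin θ ^ i * cos θ ^ 2) (by fun_prop) hh
  have hprod := (((hasDerivAt_xmax (by linarith)).pow (i + 2)).const_mul (√2 / 2)).mul hG
  have hevent : ellI i =ᶠ[nhds h] fun x => √2 / 2 * xmax x ^ (i + 2) *
      ∫ θ in -(π / 2)..π / 2, sin θ ^ i * cos θ ^ 2 * √(trigRadicand x θ) := by
    filter_upwards [lt_mem_nhds (by linarith : -(1 / 4) < h)] with x hx
    exact ellI_eq_sin_subst (by linarith) i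
  refine (hprod.congr_of_eventuallyEq hevent).congr_deriv ?_
  have hibp : trigIntegral h (fun θ => (i + 2 : ℝ) * (sin θ ^ i * cos θ ^ 2 * trigRadicand h θ)
      + xmax h ^ 2 * (sin θ ^ i * cos θ ^ 2 * (1 + sin θ ^ 2))
      + (-2 * (xmax h ^ 2 - 1)) * sin θ ^ i) = 0 := by
    rw [← trigIntegral_eq_zero_of_hasDerivAt hh (hasDerivAt_sin_pow_succ i) (by fun_prop)]
    congr 1; ext θ; simp only [trigRadicand]; ring_nf; simp only [cos_sq']; ring
  rw [trigIntegral_linear_combination hh (by fun_prop) (by fun_prop) (by fun_prop)] at hibp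
  rw [ellI'_eq_sin_subst (by linarith), integral_mul_sqrt_trigRadicand, Pi.pow_apply,
    show i + 2 - 1 = i + 1 from rfl, Nat.cast_add, Nat.cast_two]
  have := (xmax_pos h).ne'
  have ha1 : xmax h ^ 2 - 1 ≠ 0 := by linarith
  have hK : trigIntegral h (fun θ => sin θ ^ i)
      = ((i + 2) * trigIntegral h (fun θ => sin θ ^ i * cos θ ^ 2 * trigRadicand h θ)
        + xmax h ^ 2 * trigIntegral h (fun θ => sin θ ^ i * cos θ ^ 2 * (1 + sin θ ^ 2)))
        / (2 * (xmax h ^ 2 - 1)) := by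
    rw [eq_div_iff (mul_ne_zero two_ne_zero ha1)]; linarith
  rw [hK]
  field_simp
  ring

theorem add_three_mul_ellI (i : ℕ) {h : ℝ} (hh : 0 < h) :
    (i + 3) * ellI i h = 4 * h * ellI' i h + ellI' (i + 2) h := by
  have hibp : trigIntegral h (fun θ => (i + 3 : ℝ) * (sin θ ^ i * cos θ ^ 2 * trigRadicand h θ)
      + (-2 * (xmax h ^ 2 - 2)) * sin θ ^ i + (-2) * sin θ ^ (i + 2)) = 0 := by
    rw [← trigIntegral_eq_zero_of_hasDerivAt hh (hasDerivAt_sin_pow_succ i) (by fun_prop)]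
    congr 1; ext θ; simp only [trigRadicand]; ring_nf; simp only [cos_sq']; ring
  rw [trigIntegral_linear_combination hh (by fun_prop) (by fun_prop) (by fun_prop)] at hibp
  have h1 : 0 ≤ 1 + 4 * h := by linarith
  rw [ellI_eq_sin_subst h1, integral_mul_sqrt_trigRadicand, ellI'_eq_sin_subst h1,
    ellI'_eq_sin_subst h1, four_mul_eq_xmax_sq_mul h1]
  linear_combination (√2 / 2 * xmax h ^ (i + 2)) * hibp

theorem add_five_mul_ellI_add_two (i : ℕ) {h : ℝ} (hh : 0 < h) :
    (i + 5) * ellI (i + 2) h = (i + 1) * ellI i h + (4 * h + 1) * ellI' (i + 2) h := by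
  have hibp : trigIntegral h (fun θ =>
      ((i + 5) * xmax h ^ 2 : ℝ) * (sin θ ^ (i + 2) * cos θ ^ 2 * trigRadicand h θ)
      + (-(i + 1) : ℝ) * (sin θ ^ i * cos θ ^ 2 * trigRadicand h θ)
      + (-2 * (xmax h ^ 2 - 1) ^ 2) * sin θ ^ (i + 2)) = 0 := by
    rw [← trigIntegral_eq_zero_of_hasDerivAt hh
      (fun θ => ((hasDerivAt_sin_pow_succ (i + 2) θ).const_mul (xmax h ^ 2)).sub
        (hasDerivAt_sin_pow_succ i θ)) (by fun_prop)]
    congr 1; ext θ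
    simp only [trigRadicand, Pi.sub_apply]; push_cast; ring_nf; simp only [cos_sq']; ring
  rw [trigIntegral_linear_combination hh (by fun_prop) (by fun_prop) (by fun_prop)] at hibp
  have h1 : 0 ≤ 1 + 4 * h := by linarith
  rw [ellI_eq_sin_subst h1, ellI_eq_sin_subst h1, integral_mul_sqrt_trigRadicand,
    integral_mul_sqrt_trigRadicand, ellI'_eq_sin_subst h1,
    show 4 * h + 1 = (xmax h ^ 2 - 1) ^ 2 by rw [xmax_sq_sub_one_sq h1]; ring]
  linear_combination (√2 / 2 * xmax h ^ (i + 2)) * hibp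

lemma hasDerivAt_ellI'_two {h : ℝ} (hh : 0 < h) :
    HasDerivAt (ellI' 2) ((ellI' 2 h - ellI' 0 h) / (4 * h + 1)) h := by
  have hrel : ∀ x, 0 < x → ellI' 2 x = (5 * ellI 2 x - ellI 0 x) / (4 * x + 1) := by
    intro x hx
    have h5 : 5 * ellI 2 x = ellI 0 x + (4 * x + 1) * ellI' 2 x := by
      simpa using add_five_mul_ellI_add_two 0 hx
    rw [eq_div_iff (by positivity)]
    linarith
  have hd := (((hasDerivAt_ellI 2 hh).const_mul 5).sub (hasDerivAt_ellI 0 hh)).div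
    (((hasDerivAt_id h).const_mul 4).add_const 1) (by positivity)
  refine (hd.congr_of_eventuallyEq ?_).congr_deriv ?_
  · filter_upwards [lt_mem_nhds hh] with x hx using hrel x hx
  · rw [hrel h hh]
    simp only [Pi.sub_apply, id]
    field_simp
    ring

lemma hasDerivAt_ellI'_zero {h : ℝ} (hh : 0 < h) :
    HasDerivAt (ellI' 0) (-3 * ellI 0 h / (4 * h * (4 * h + 1))) h := by
  have hrel : ∀ x, 0 < x → ellI' 0 x = (3 * ellI 0 x - ellI' 2 x) / (4 * x) := by
    intro x hx
    have h3 : 3 * ellI 0 x = 4 * x * ellI' 0 x + ellI' 2 x := by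
      simpa using add_three_mul_ellI 0 hx
    rw [eq_div_iff (by positivity)]
    linarith
  have hd := (((hasDerivAt_ellI 0 hh).const_mul 3).sub (hasDerivAt_ellI'_two hh)).div
    ((hasDerivAt_id h).const_mul 4) (by positivity)
  refine (hd.congr_of_eventuallyEq ?_).congr_deriv ?_
  · filter_upwards [lt_mem_nhds hh] with x hx using hrel x hx
  · have h3 : 3 * ellI 0 h = 4 * h * ellI' 0 h + ellI' 2 h := by
      simpa using add_three_mul_ellI 0 hh
    simp only [Pi.sub_apply, id]
    rw [show ellI 0 h = (4 * h * ellI' 0 h + ellI' 2 h) / 3 by linarith]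
    field_simp
    ring

/-- Hypergeometric Picard-Fuchs equation: `I₀` is twice differentiable on `(0,∞)` and
`4h(4h+1) I₀'' = -3 I₀` there. -/
theorem picard_fuchs_second_order (h : ℝ) (hh : 0 < h) :
    DifferentiableAt ℝ (ellI 0) h ∧ DifferentiableAt ℝ (deriv (ellI 0)) h ∧
      4*h*(4*h + 1) * deriv (deriv (ellI 0)) h = -3 * ellI 0 h := by
  have hderiv : deriv (ellI 0) =ᶠ[nhds h] ellI' 0 := by
    filter_upwards [lt_mem_nhds hh] with x hx using (hasDerivAt_ellI 0 hx).deriv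
  have hd2 := (hasDerivAt_ellI'_zero hh).congr_of_eventuallyEq hderiv
  refine ⟨(hasDerivAt_ellI 0 hh).differentiableAt, hd2.differentiableAt, ?_⟩
  rw [hd2.deriv]
  field_simp
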